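/- arXiv:2602.04685 — 2 statements merged into one kernel-verified Lean document; each statement's English description precedes it below -/
import Mathlib

section
/- Let Q : [0,∞) → (0,∞) be monotone increasing with r² < Q(r) for all r, differentiable on (R,∞), and suppose Q(r) → ∞ and Q'(r)·Q(r)^{-3/2} → 0 as r → ∞. Define ψ(r) = exp(-√2 · ∫₀ʳ Q(t)^{1/2} dt). Then there exists R' > 0 such that for all r ≥ R', ψ''(r) + ((n-1)/r)·ψ'(r) ≥ Q(r)·ψ(r), where n ≥ 3 is a fixed integer. -/
open Real MeasureTheory Filter

set_option maxHeartbeats 800000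

theorem stmt_0 (n : ℕ) (hn : 3 ≤ n) (Q : ℝ → ℝ) (R : ℝ)
    (hQpos : ∀ r, 0 ≤ r → 0 < Q r)
    (hQmono : MonotoneOn Q (Set.Ici 0))
    (hQgt : ∀ r, 0 ≤ r → r ^ 2 < Q r)
    (hQdiff : DifferentiableOn ℝ Q (Set.Ioi R))
    (hQtop : Tendsto Q atTop atTop)
    (hQ' : Tendsto (fun r => deriv Q r / (Q r * Real.sqrt (Q r))) atTop (nhds 0))
    (ψ : ℝ → ℝ)
    (hψ : ∀ r, ψ r = Real.exp (-(Real.sqrt 2) * ∫ t in (0:ℝ)..r, Real.sqrt (Q t))) :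
    ∃ R' > 0, ∀ r ≥ R',
      deriv (deriv ψ) r + ((n : ℝ) - 1) / r * deriv ψ r ≥ Q r * ψ r := by
  have hfun := funext hψ
  subst hfun
  set R₀ := max R 0 with hR₀def
  set ψ : ℝ → ℝ := fun r => Real.exp (-(Real.sqrt 2) * ∫ t in (0:ℝ)..r, Real.sqrt (Q t))
    with hψdef
  have key : ∀ x, R₀ < x → HasDerivAt ψ (ψ x * (-(Real.sqrt 2) * Real.sqrt (Q x))) x := by
    intro x hx
    have hxR : R < x := lt_of_le_of_lt (le_max_left _ _) hx
    have hx0 : (0:ℝ) < x := lt_of_le_of_lt (le_max_right _ _) hx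
    have hint : IntervalIntegrable (fun t => Real.sqrt (Q t)) volume 0 x := by
      apply MonotoneOn.intervalIntegrable
      intro a ha b hb hab
      rw [Set.uIcc_of_le hx0.le] at ha hb
      exact Real.sqrt_le_sqrt (hQmono ha.1 hb.1 hab)
    have hmeas : StronglyMeasurableAtFilter (fun t => Real.sqrt (Q t)) (nhds x) volume := by
      refine ⟨Set.Ioi R, Ioi_mem_nhds hxR, ?_⟩
      exact (Real.continuous_sqrt.comp_continuousOn hQdiff.continuousOn).aestronglyMeasurable
        measurableSet_Ioi
    have hQdx : DifferentiableAt ℝ Q x := hQdiff.differentiableAt (Ioi_mem_nhds hxR)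
    have hcont : ContinuousAt (fun t => Real.sqrt (Q t)) x :=
      Real.continuous_sqrt.continuousAt.comp hQdx.continuousAt
    have hF : HasDerivAt (fun u => ∫ t in (0:ℝ)..u, Real.sqrt (Q t)) (Real.sqrt (Q x)) x :=
      intervalIntegral.integral_hasDerivAt_right hint hmeas hcont
    exact (hF.const_mul (-(Real.sqrt 2))).exp
  -- eventual conditions
  have h1 : ∀ᶠ r in atTop, |deriv Q r / (Q r * Real.sqrt (Q r))| < Real.sqrt 2 / 2 := by
    have h0 : (0:ℝ) < Real.sqrt 2 / 2 := by positivity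
    have := hQ'.eventually (Metric.ball_mem_nhds 0 h0)
    simpa only [Metric.mem_ball, Real.dist_eq, sub_zero] using this
  have h2 : ∀ᶠ r in atTop, R₀ < r := eventually_gt_atTop R₀
  have h3 : ∀ᶠ r in atTop, (n:ℝ) ≤ r := eventually_ge_atTop _
  obtain ⟨a, ha⟩ := eventually_atTop.1 ((h1.and h2).and h3)
  refine ⟨max a 1, lt_of_lt_of_le one_pos (le_max_right _ _), ?_⟩
  intro r hr
  obtain ⟨⟨habs, hrR₀⟩, hrn⟩ := ha r (le_trans (le_max_left _ _) hr)
  have hxR : R < r := lt_of_le_of_lt (le_max_left _ _) hrR₀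
  have hr0 : (0:ℝ) < r := lt_of_le_of_lt (le_max_right _ _) hrR₀
  have hqpos : 0 < Q r := hQpos r hr0.le
  have hs : 0 < Real.sqrt (Q r) := Real.sqrt_pos.2 hqpos
  have hp : 0 < ψ r := Real.exp_pos _
  have hQd : HasDerivAt Q (deriv Q r) r :=
    (hQdiff.differentiableAt (Ioi_mem_nhds hxR)).hasDerivAt
  have hg : HasDerivAt (fun x => ψ x * (-(Real.sqrt 2) * Real.sqrt (Q x)))
      ((ψ r * (-(Real.sqrt 2) * Real.sqrt (Q r))) * (-(Real.sqrt 2) * Real.sqrt (Q r))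
        + ψ r * (-(Real.sqrt 2) * (1 / (2 * Real.sqrt (Q r)) * deriv Q r))) r :=
    (key r hrR₀).mul (((Real.hasDerivAt_sqrt hqpos.ne').comp r hQd).const_mul (-(Real.sqrt 2)))
  have heq : deriv ψ =ᶠ[nhds r] fun x => ψ x * (-(Real.sqrt 2) * Real.sqrt (Q x)) := by
    filter_upwards [Ioi_mem_nhds hrR₀] with x hx using (key x hx).deriv
  have h2nd : deriv (deriv ψ) r =
      (ψ r * (-(Real.sqrt 2) * Real.sqrt (Q r))) * (-(Real.sqrt 2) * Real.sqrt (Q r))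
        + ψ r * (-(Real.sqrt 2) * (1 / (2 * Real.sqrt (Q r)) * deriv Q r)) :=
    heq.deriv_eq.trans hg.deriv
  have h1st : deriv ψ r = ψ r * (-(Real.sqrt 2) * Real.sqrt (Q r)) := (key r hrR₀).deriv
  rw [ge_iff_le, h2nd, h1st]
  set c := Real.sqrt 2 with hcdef
  set s := Real.sqrt (Q r) with hsdef
  set q := Q r with hqdef
  set p := ψ r with hpdef
  set d := deriv Q r with hddef
  have hc2 : c * c = 2 := Real.mul_self_sqrt (by norm_num)
  have hs2 : s * s = q := Real.mul_self_sqrt hqpos.le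
  have hcpos : 0 < c := Real.sqrt_pos.2 (by norm_num)
  have hclt : c < 3 / 2 := by
    rw [hcdef]
    rw [show (3:ℝ)/2 = Real.sqrt ((3/2)^2) by rw [Real.sqrt_sq]; norm_num]
    exact Real.sqrt_lt_sqrt (by norm_num) (by norm_num)
  have hsr : r ≤ s := by
    rw [hsdef]
    calc r = Real.sqrt (r ^ 2) := by rw [Real.sqrt_sq hr0.le]
    _ ≤ Real.sqrt (Q r) := Real.sqrt_le_sqrt (hQgt r hr0.le).le
  -- bound on derivative term
  have hd : d ≤ c * (q * s) / 2 := by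
    have h := (le_abs_self _).trans habs.le
    rw [div_le_div_iff₀ (by positivity) (by norm_num)] at h
    linarith
  have e1 : c * (1 / (2 * s) * d) ≤ q / 2 := by
    rw [show c * (1 / (2 * s) * d) = c * d / (2 * s) by ring,
      div_le_div_iff₀ (by positivity) (by norm_num)]
    have h2' : c * d ≤ c * (c * (q * s) / 2) := mul_le_mul_of_nonneg_left hd hcpos.le
    have h3' : c * (c * (q * s) / 2) = q * s := by linear_combination (q * s / 2) * hc2
    linarith
  have hn3 : (3:ℝ) ≤ (n:ℝ) := by exact_mod_cast hn
  have e2 : ((n:ℝ) - 1) / r * (c * s) ≤ q / 2 := by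
    rw [div_mul_eq_mul_div, div_le_div_iff₀ hr0 (by norm_num)]
    have h1 : ((n:ℝ) - 1) * (c * s) ≤ ((n:ℝ) - 1) * ((3/2) * s) := by
      apply mul_le_mul_of_nonneg_left _ (by linarith)
      exact mul_le_mul_of_nonneg_right hclt.le hs.le
    nlinarith [mul_le_mul_of_nonneg_left hsr hs.le, mul_le_mul_of_nonneg_right hrn hr0.le,
      mul_le_mul_of_nonneg_right hrn (le_trans (by norm_num) hn3)]
  have t1 : p * (c * (1 / (2 * s) * d)) ≤ p * (q / 2) :=
    mul_le_mul_of_nonneg_left e1 hp.le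
  have t2 : ((n:ℝ) - 1) / r * (c * s) * p ≤ q / 2 * p :=
    mul_le_mul_of_nonneg_right e2 hp.le
  have hsq : p * (-(c) * s) * (-(c) * s) = 2 * (q * p) := by
    have : p * (-(c) * s) * (-(c) * s) = p * (s * s) * (c * c) := by ring
    rw [this, hc2, hs2]; ring
  linarith [t1, t2, hsq]
end

section
/- Let H, φ, E₀, μ be as above, with e^{-tH} positivity improving. Then for every t > 0 and every u ∈ L^∞(ℝⁿ, ℝ) nonnegative a.e., one has 0 ≤ e^{-tH}(φu)(x) ≤ e^{-tE₀}‖u‖_∞ · φ(x) almost everywhere; equivalently ‖e^{-tH̃}u‖_∞ ≤ e^{-tE₀}‖u‖_∞. -/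
/-!
Positivity improvement together with additivity makes `e^{-tH}` monotone for the a.e. order;
the only extra point is that it maps null functions to null functions, which follows by testing
it against `1 ± k • h` for all `k`. Then `0 ≤ φ u ≤ ‖u‖_∞ φ` gives
`0 ≤ e^{-tH}(φ u) ≤ e^{-tH}(q φ) = e^{-tE₀} q φ` for every rational `q ≥ ‖u‖_∞`, and letting
`q ↓ ‖u‖_∞` yields the bound.
-/

open Real MeasureTheory Filter
open scoped ENNReal

lemma le_mul_of_forall_lt_rat_imp_le_mul {a b M : ℝ} (hb : 0 ≤ b)
    (h : ∀ q : ℚ, M < q → a ≤ q * b) : a ≤ M * b := by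
  rcases hb.eq_or_lt with rfl | hb
  · obtain ⟨q, hq⟩ := exists_rat_gt M
    simpa using h q hq
  · rw [← div_le_iff₀ hb]
    exact le_of_forall_lt_rat_imp_le fun q hq => (div_le_iff₀ hb).mpr (h q hq)

namespace MeasureTheory

variable {α : Type*} [MeasurableSpace α]

def IsPositivityImproving (μ : Measure α) (T : (α → ℝ) → (α → ℝ)) : Prop :=
  ∀ f, 0 ≤ᵐ[μ] f → ¬ f =ᵐ[μ] 0 → ∀ᵐ x ∂μ, 0 < T f x

lemma ae_norm_le_toReal_eLpNorm_top {μ : Measure α} {f : α → ℝ} (hf : eLpNorm f ∞ μ ≠ ∞) :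
    ∀ᵐ x ∂μ, ‖f x‖ ≤ (eLpNorm f ∞ μ).toReal := by
  filter_upwards [ae_le_eLpNormEssSup (f := f) (μ := μ)] with x hx
  rw [← eLpNorm_exponent_top] at hx
  simpa using ENNReal.toReal_mono hf hx

namespace IsPositivityImproving

variable {μ : Measure α} {T : (α → ℝ) →+ (α → ℝ)}

lemma ae_pos_add_zsmul [NeZero μ] (hT : IsPositivityImproving μ T) {h : α → ℝ}
    (hh : h =ᵐ[μ] 0) (k : ℤ) : ∀ᵐ x ∂μ, 0 < T 1 x + k * T h x := by
  have heq : (1 + k • h : α → ℝ) =ᵐ[μ] 1 := by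
    filter_upwards [hh] with x hx
    simp [hx]
  have hnn : 0 ≤ᵐ[μ] (1 + k • h) := heq.mono fun x hx => hx ▸ zero_le_one
  have hne : ¬ (1 + k • h) =ᵐ[μ] 0 := fun h0 => by
    obtain ⟨x, hx⟩ := (heq.symm.trans h0).exists
    exact one_ne_zero hx
  have := hT _ hnn hne
  rw [map_add, map_zsmul] at this
  simpa using this

lemma map_ae_eq_zero [NeZero μ] (hT : IsPositivityImproving μ T) {h : α → ℝ}
    (hh : h =ᵐ[μ] 0) : T h =ᵐ[μ] 0 := by
  have hbound : ∀ k : ℕ, ∀ᵐ x ∂μ, k * |T h x| < T 1 x := fun k => by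
    filter_upwards [hT.ae_pos_add_zsmul hh k, hT.ae_pos_add_zsmul hh (-k)] with x hplus hminus
    push_cast at hplus hminus
    rw [← abs_of_nonneg (Nat.cast_nonneg (α := ℝ) k), ← abs_mul, abs_lt]
    constructor <;> linarith
  filter_upwards [ae_all_iff.mpr hbound] with x hx
  by_contra hne
  obtain ⟨k, hk⟩ := exists_nat_gt (T 1 x / |T h x|)
  have := (div_lt_iff₀ (abs_pos.mpr hne)).mp hk
  linarith [hx k]

lemma ae_nonneg [NeZero μ] (hT : IsPositivityImproving μ T) {f : α → ℝ} (hf : 0 ≤ᵐ[μ] f) :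
    0 ≤ᵐ[μ] T f := by
  by_cases hf0 : f =ᵐ[μ] 0
  · exact (hT.map_ae_eq_zero hf0).mono fun x hx => hx.ge
  · exact (hT f hf hf0).mono fun x hx => hx.le

lemma ae_mono [NeZero μ] (hT : IsPositivityImproving μ T) {f g : α → ℝ} (hfg : f ≤ᵐ[μ] g) :
    T f ≤ᵐ[μ] T g := by
  have := hT.ae_nonneg (f := g - f) (hfg.mono fun x hx => sub_nonneg.mpr hx)
  filter_upwards [this] with x hx
  simpa using hx

/-- Additivity only gives `T (q • φ) = q • T φ` for rational `q`, so the bound `f ≤ M • φ` is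
passed through the rationals above `M`. -/
lemma ae_le_smul_of_le_smul_eigenfunction [NeZero μ] (hT : IsPositivityImproving μ T)
    {φ f : α → ℝ} {c M : ℝ} (hφ : 0 ≤ᵐ[μ] φ) (hc : 0 ≤ c) (hTφ : T φ =ᵐ[μ] c • φ)
    (hf : f ≤ᵐ[μ] M • φ) : T f ≤ᵐ[μ] (c * M) • φ := by
  have hrat : ∀ q : ℚ, ∀ᵐ x ∂μ, M < q → T f x ≤ q * (c * φ x) := fun q => by
    by_cases hMq : M < q
    · have hle : f ≤ᵐ[μ] q • φ := by
        filter_upwards [hf, hφ] with x hfx hφx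
        simp only [Pi.smul_apply, smul_eq_mul, Rat.smul_def] at hfx ⊢
        exact hfx.trans (mul_le_mul_of_nonneg_right hMq.le hφx)
      filter_upwards [hT.ae_mono hle, hTφ] with x hx hTφx _
      simpa [map_rat_smul, Rat.smul_def, hTφx] using hx
    · exact ae_of_all _ fun x h => absurd h hMq
  filter_upwards [ae_all_iff.mpr hrat, hφ] with x hx hφx
  simpa [mul_assoc, mul_left_comm] using le_mul_of_forall_lt_rat_imp_le_mul (mul_nonneg hc hφx) hx

end IsPositivityImproving

end MeasureTheory

theorem stmt_11_general (n : ℕ)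
    (T : ℝ → ((Fin n → ℝ) → ℝ) → ((Fin n → ℝ) → ℝ)) -- T t = e^{-tH}
    (φ : (Fin n → ℝ) → ℝ) (E₀ : ℝ)
    (hφpos : ∀ x, 0 < φ x)
    -- linearity of e^{-tH}
    (hlin : ∀ t > 0, ∀ f g : (Fin n → ℝ) → ℝ,
      T t (f - g) = T t f - T t g)
    -- e^{-tH} is positivity improving
    (himp : ∀ t > 0, ∀ f : (Fin n → ℝ) → ℝ, (∀ᵐ x, 0 ≤ f x) →
      ¬ (f =ᵐ[volume] 0) → ∀ᵐ x, 0 < T t f x)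
    -- Hφ = E₀ φ, i.e. e^{-tH} φ = e^{-t E₀} φ
    (hground : ∀ t > 0, T t φ =ᵐ[volume] fun x => Real.exp (-t * E₀) * φ x) :
    ∀ t > 0, ∀ u : (Fin n → ℝ) → ℝ,
      eLpNorm u ⊤ (volume : Measure (Fin n → ℝ)) < ⊤ → (∀ᵐ x, 0 ≤ u x) →
      ∀ᵐ x, 0 ≤ T t (fun y => φ y * u y) x ∧
        T t (fun y => φ y * u y) x
          ≤ Real.exp (-t * E₀) * (eLpNorm u ⊤ (volume : Measure (Fin n → ℝ))).toReal * φ x := by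
  intro t ht u hu hunn
  set M := (eLpNorm u ⊤ (volume : Measure (Fin n → ℝ))).toReal
  have hT : IsPositivityImproving volume (AddMonoidHom.ofMapSub (T t) (hlin t ht)) := himp t ht
  have hφ : 0 ≤ᵐ[volume] φ := ae_of_all _ fun x => (hφpos x).le
  have hφu : 0 ≤ᵐ[volume] fun y => φ y * u y :=
    hunn.mono fun x hx => mul_nonneg (hφpos x).le hx
  have hφuM : (fun y => φ y * u y) ≤ᵐ[volume] M • φ := by
    filter_upwards [ae_norm_le_toReal_eLpNorm_top hu.ne] with x hx
    rw [Pi.smul_apply, smul_eq_mul, mul_comm M]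
    exact mul_le_mul_of_nonneg_left ((le_abs_self _).trans hx) (hφpos x).le
  filter_upwards [hT.ae_nonneg hφu,
    hT.ae_le_smul_of_le_smul_eigenfunction hφ (exp_pos _).le (hground t ht) hφuM] with x hlow hup
  exact ⟨hlow, by simpa [mul_assoc] using hup⟩

theorem stmt_11 (n : ℕ) (hn : 1 ≤ n)
    (T : ℝ → ((Fin n → ℝ) → ℝ) → ((Fin n → ℝ) → ℝ)) -- T t = e^{-tH}
    (φ : (Fin n → ℝ) → ℝ) (E₀ : ℝ) (hE₀ : 0 ≤ E₀)
    (hφmeas : Measurable φ) (hφpos : ∀ x, 0 < φ x)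
    (hφL2 : MemLp φ 2 (volume : Measure (Fin n → ℝ)))
    -- linearity of e^{-tH}
    (hlin : ∀ t > 0, ∀ f g : (Fin n → ℝ) → ℝ,
      T t (f - g) = T t f - T t g)
    -- e^{-tH} is positivity improving
    (himp : ∀ t > 0, ∀ f : (Fin n → ℝ) → ℝ, (∀ᵐ x, 0 ≤ f x) →
      ¬ (f =ᵐ[volume] 0) → ∀ᵐ x, 0 < T t f x)
    -- Hφ = E₀ φ, i.e. e^{-tH} φ = e^{-t E₀} φ
    (hground : ∀ t > 0, T t φ =ᵐ[volume] fun x => Real.exp (-t * E₀) * φ x) :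
    ∀ t > 0, ∀ u : (Fin n → ℝ) → ℝ,
      eLpNorm u ⊤ (volume : Measure (Fin n → ℝ)) < ⊤ → (∀ᵐ x, 0 ≤ u x) →
      ∀ᵐ x, 0 ≤ T t (fun y => φ y * u y) x ∧
        T t (fun y => φ y * u y) x
          ≤ Real.exp (-t * E₀) * (eLpNorm u ⊤ (volume : Measure (Fin n → ℝ))).toReal * φ x :=
  stmt_11_general n T φ E₀ hφpos hlin himp hground
end
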